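/- In the three-type game specified in the context, the strategy profile π* with π₁*(s'|θ) = 1 for every θ ∈ Θ and π₂*(a⁴|s') = π₂*(a⁴|s'') = 1 is a rationality-compatible equilibrium (RCE); moreover, the only pair of distinct types related by rational compatibility at s'' is θ'' ≿_{s''} θ'. -/

import Mathlib

open scoped Classical
open Finset Filter

noncomputable section

/-- `p` is a probability distribution on the finite type `X`. -/
def IsDist {X : Type*} [Fintype X] (p : X → ℝ) : Prop :=
  (∀ x, 0 ≤ p x) ∧ ∑ x, p x = 1

variable {Θ S A : Type*} [Fintype Θ] [Fintype S] [Fintype A]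

/-- Sender's expected payoff `u₁(θ, s, π₂(·|s))` from signal `s` when the receiver plays `π₂`. -/
def u1R (u₁ : Θ → S → A → ℝ) (π₂ : S → A → ℝ) (θ : Θ) (s : S) : ℝ :=
  ∑ a, π₂ s a * u₁ θ s a

/-- Receiver's expected payoff of action `a` after signal `s` under belief `p`. -/
def expU2 (u₂ : Θ → S → A → ℝ) (p : Θ → ℝ) (s : S) (a : A) : ℝ :=
  ∑ θ, p θ * u₂ θ s a

/-- `BR(p, s)`: pure best responses to belief `p` after signal `s`. -/
def BRb (u₂ : Θ → S → A → ℝ) (p : Θ → ℝ) (s : S) : Set A :=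
  {a | ∀ a', expU2 u₂ p s a' ≤ expU2 u₂ p s a}

/-- `A_s^BR`: actions that best respond to some belief after `s`. -/
def ABR (u₂ : Θ → S → A → ℝ) (s : S) : Set A :=
  {a | ∃ p, IsDist p ∧ a ∈ BRb u₂ p s}

/-- Membership in `Π₂•`: a receiver behavior strategy supported on `A_s^BR` after every `s`. -/
def Rational2 (u₂ : Θ → S → A → ℝ) (π₂ : S → A → ℝ) : Prop :=
  (∀ s, IsDist (π₂ s)) ∧ ∀ s a, π₂ s a ≠ 0 → a ∈ ABR u₂ s

/-- `u₁(θ,s,π₂(·|s)) ≥ max_{s' ≠ s} u₁(θ,s',π₂(·|s'))`. -/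
def WeakBest (u₁ : Θ → S → A → ℝ) (π₂ : S → A → ℝ) (θ : Θ) (s : S) : Prop :=
  ∀ s', s' ≠ s → u1R u₁ π₂ θ s' ≤ u1R u₁ π₂ θ s

/-- `u₁(θ,s,π₂(·|s)) > max_{s' ≠ s} u₁(θ,s',π₂(·|s'))`. -/
def StrictBest (u₁ : Θ → S → A → ℝ) (π₂ : S → A → ℝ) (θ : Θ) (s : S) : Prop :=
  ∀ s', s' ≠ s → u1R u₁ π₂ θ s' < u1R u₁ π₂ θ s

/-- `θ' ≿_s θ''`: `s` is more rationally-compatible with `θ'` than with `θ''`. -/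
def MoreCompat (u₁ u₂ : Θ → S → A → ℝ) (s : S) (θ' θ'' : Θ) : Prop :=
  ∀ π₂, Rational2 u₂ π₂ → WeakBest u₁ π₂ θ'' s → StrictBest u₁ π₂ θ' s

/-- `s` maximizes `s' ↦ u₁(θ, s', π₂(·|s'))`. -/
def GlobalBest (u₁ : Θ → S → A → ℝ) (π₂ : S → A → ℝ) (θ : Θ) (s : S) : Prop :=
  ∀ s', u1R u₁ π₂ θ s' ≤ u1R u₁ π₂ θ s

/-- `S_θ`: signals that best respond to some (not necessarily rational) receiver strategy. -/
def Sθ (u₁ : Θ → S → A → ℝ) (θ : Θ) : Set S :=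
  {s | ∃ π₂ : S → A → ℝ, (∀ s', IsDist (π₂ s')) ∧ GlobalBest u₁ π₂ θ s}

/-- `Θ_s`: types for which `s` is not dominated. -/
def Θtypes (u₁ : Θ → S → A → ℝ) (s : S) : Set Θ := {θ | s ∈ Sθ u₁ θ}

/-- Membership in `Π₁•`. -/
def Rational1 (u₁ : Θ → S → A → ℝ) (π₁ : Θ → S → ℝ) : Prop :=
  (∀ θ, IsDist (π₁ θ)) ∧ ∀ θ s, π₁ θ s ≠ 0 → s ∈ Sθ u₁ θ

/-- Nash equilibrium of the signaling game. -/
def NashEq (lam : Θ → ℝ) (u₁ u₂ : Θ → S → A → ℝ)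
    (π₁ : Θ → S → ℝ) (π₂ : S → A → ℝ) : Prop :=
  (∀ θ, IsDist (π₁ θ)) ∧ (∀ s, IsDist (π₂ s)) ∧
  (∀ θ s, π₁ θ s ≠ 0 → GlobalBest u₁ π₂ θ s) ∧
  (∀ s, (∃ θ, π₁ θ s ≠ 0) → ∀ a, π₂ s a ≠ 0 →
    ∀ a', ∑ θ, lam θ * π₁ θ s * u₂ θ s a' ≤ ∑ θ, lam θ * π₁ θ s * u₂ θ s a)

/-- Equilibrium expected payoff `E_π[u₁ | θ]`. -/
def eqPayoff (u₁ : Θ → S → A → ℝ) (π₁ : Θ → S → ℝ) (π₂ : S → A → ℝ) (θ : Θ) : ℝ :=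
  ∑ s, π₁ θ s * u1R u₁ π₂ θ s

/-- `s` is off the path of play of `π₁`. -/
def OffPath (π₁ : Θ → S → ℝ) (s : S) : Prop := ∀ θ, π₁ θ s = 0

/-- `J̃(s, π)`: types for which some best response to `s` weakly improves on the equilibrium. -/
def Jt (u₁ u₂ : Θ → S → A → ℝ) (π₁ : Θ → S → ℝ) (π₂ : S → A → ℝ) (s : S) : Set Θ :=
  {θ | ∃ a ∈ ABR u₂ s, eqPayoff u₁ π₁ π₂ θ ≤ u₁ θ s a}

/-- The odds-ratio condition defining `P_{θ'▷θ''}`. -/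
def OddsLe (lam : Θ → ℝ) (θ' θ'' : Θ) (p : Θ → ℝ) : Prop :=
  p θ'' * lam θ' ≤ lam θ'' * p θ'

/-- `Δ(T)`: beliefs supported on `T`. -/
def DeltaOn {Θ : Type*} [Fintype Θ] (T : Set Θ) : Set (Θ → ℝ) :=
  {p | IsDist p ∧ ∀ θ ∉ T, p θ = 0}

/-- `P̃(s, π)`: rationality-compatible beliefs at profile `π`. -/
def Pt (lam : Θ → ℝ) (u₁ u₂ : Θ → S → A → ℝ) (π₁ : Θ → S → ℝ) (π₂ : S → A → ℝ)
    (s : S) : Set (Θ → ℝ) :=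
  if (Jt u₁ u₂ π₁ π₂ s).Nonempty then
    DeltaOn (Jt u₁ u₂ π₁ π₂ s) ∩
      {p | ∀ θ' θ'', MoreCompat u₁ u₂ s θ' θ'' → OddsLe lam θ' θ'' p}
  else DeltaOn (Θtypes u₁ s)

/-- Rationality-compatible equilibrium. -/
def RCE (lam : Θ → ℝ) (u₁ u₂ : Θ → S → A → ℝ)
    (π₁ : Θ → S → ℝ) (π₂ : S → A → ℝ) : Prop :=
  NashEq lam u₁ u₂ π₁ π₂ ∧
  ∀ s a, π₂ s a ≠ 0 → ∃ p ∈ Pt lam u₁ u₂ π₁ π₂ s, a ∈ BRb u₂ p s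

/-- `P̂(s)`: uniformly rationality-compatible beliefs. -/
def Ph (lam : Θ → ℝ) (u₁ u₂ : Θ → S → A → ℝ) (s : S) : Set (Θ → ℝ) :=
  DeltaOn (Θtypes u₁ s) ∩
    {p | ∀ θ' θ'', MoreCompat u₁ u₂ s θ' θ'' → OddsLe lam θ' θ'' p}

/-- Uniform rationality-compatible equilibrium. -/
def URCE (lam : Θ → ℝ) (u₁ u₂ : Θ → S → A → ℝ)
    (π₁ : Θ → S → ℝ) (π₂ : S → A → ℝ) : Prop :=
  NashEq lam u₁ u₂ π₁ π₂ ∧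
  ∀ θ s, OffPath π₁ s → ∀ a, (∃ p ∈ Ph lam u₁ u₂ s, a ∈ BRb u₂ p s) →
    u₁ θ s a ≤ eqPayoff u₁ π₁ π₂ θ

/-- Receiver's expected payoff of a mixed action `α` after `s` under belief `p`. -/
def expU2m (u₂ : Θ → S → A → ℝ) (p : Θ → ℝ) (s : S) (α : A → ℝ) : ℝ :=
  ∑ θ, p θ * ∑ a, α a * u₂ θ s a

/-- `MBR(p, s)`: mixed best responses to belief `p` after `s`. -/
def MBRb (u₂ : Θ → S → A → ℝ) (p : Θ → ℝ) (s : S) : Set (A → ℝ) :=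
  {α | IsDist α ∧ ∀ α', IsDist α' → expU2m u₂ p s α' ≤ expU2m u₂ p s α}

/-- `MBR(s)`. -/
def MBR (u₂ : Θ → S → A → ℝ) (s : S) : Set (A → ℝ) :=
  {α | ∃ p, IsDist p ∧ α ∈ MBRb u₂ p s}

/-- `u₁(θ, s, α)` for a mixed action `α`. -/
def u1m (u₁ : Θ → S → A → ℝ) (θ : Θ) (s : S) (α : A → ℝ) : ℝ :=
  ∑ a, α a * u₁ θ s a

/-- `D(θ, s; π)`. -/
def Dset (u₁ u₂ : Θ → S → A → ℝ) (π₁ : Θ → S → ℝ) (π₂ : S → A → ℝ)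
    (θ : Θ) (s : S) : Set (A → ℝ) :=
  {α | α ∈ MBR u₂ s ∧ eqPayoff u₁ π₁ π₂ θ < u1m u₁ θ s α}

/-- `D°(θ, s; π)`. -/
def D0set (u₁ u₂ : Θ → S → A → ℝ) (π₁ : Θ → S → ℝ) (π₂ : S → A → ℝ)
    (θ : Θ) (s : S) : Set (A → ℝ) :=
  {α | α ∈ MBR u₂ s ∧ eqPayoff u₁ π₁ π₂ θ = u1m u₁ θ s α}

/-! ### The three-type game (RCE that is not divine; iterated divinity) -/

/-- Sender types: `t1 = θ'`, `t2 = θ''`, `t3 = θ'''`. -/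
inductive Ty | t1 | t2 | t3
deriving DecidableEq

instance : Fintype Ty :=
  ⟨{Ty.t1, Ty.t2, Ty.t3}, fun x => by cases x <;> simp⟩

/-- Signals: `s1 = s'`, `s2 = s''`. -/
inductive Sg | s1 | s2
deriving DecidableEq

instance : Fintype Sg :=
  ⟨{Sg.s1, Sg.s2}, fun x => by cases x <;> simp⟩

/-- Receiver actions. -/
inductive Ac | a1 | a2 | a3 | a4
deriving DecidableEq

instance : Fintype Ac :=
  ⟨{Ac.a1, Ac.a2, Ac.a3, Ac.a4}, fun x => by cases x <;> simp⟩

/-- Prior: all three types equally likely. -/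
def lamG : Ty → ℝ := fun _ => 1 / 3

/-- Sender payoffs: everything after `s'` is 0; after `s''` as in the example. -/
def u1G : Ty → Sg → Ac → ℝ
  | _, .s1, _ => 0
  | .t1, .s2, .a1 => 1
  | .t1, .s2, .a2 => -1
  | .t1, .s2, .a3 => -2
  | .t1, .s2, .a4 => -7
  | .t2, .s2, .a1 => 5
  | .t2, .s2, .a2 => 3
  | .t2, .s2, .a3 => -1
  | .t2, .s2, .a4 => -5
  | .t3, .s2, .a1 => -3
  | .t3, .s2, .a2 => 5
  | .t3, .s2, .a3 => 1
  | .t3, .s2, .a4 => -3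

/-- Receiver payoffs: everything after `s'` is 0; after `s''` as in the example. -/
def u2G : Ty → Sg → Ac → ℝ
  | _, .s1, _ => 0
  | .t1, .s2, .a1 => 0.9
  | .t1, .s2, .a2 => 0
  | .t1, .s2, .a3 => 0
  | .t1, .s2, .a4 => 0
  | .t2, .s2, .a1 => 0
  | .t2, .s2, .a2 => 1
  | .t2, .s2, .a3 => 0
  | .t2, .s2, .a4 => 0.8
  | .t3, .s2, .a1 => 0
  | .t3, .s2, .a2 => 0
  | .t3, .s2, .a3 => 1.7
  | .t3, .s2, .a4 => 0.8

/-- All types pool on `s'`. -/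
def pi1G : Ty → Sg → ℝ := fun _ s => if s = Sg.s1 then 1 else 0

/-- The receiver plays `a⁴` after every signal. -/
def pi2G : Sg → Ac → ℝ := fun _ a => if a = Ac.a4 then 1 else 0

/-! All types pool on `s'` and earn `0`. After `s''` every type has a rational reply worth at
least `0` to it, so `J̃(s'') = Θ`. For every action, `θ''` gains at least `1` more than `θ'`
at `s''`, so whenever `θ'` weakly prefers `s''` the type `θ''` strictly does. Every other
ordered pair is refuted by a pure receiver strategy (`a¹`, `a²` or `a³`) under which the second
type weakly prefers `s''` and the first does not. So the only restriction on `P̃(s'')` is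
`p θ' ≤ p θ''`, and the belief `(0, 0.7, 0.3)` makes `a⁴` a best response. -/

section General

variable {X Θ S A : Type*}

def pointMass [DecidableEq X] (c : X) : X → ℝ := fun x => if x = c then 1 else 0

lemma pointMass_self [DecidableEq X] (c : X) : pointMass c c = 1 := if_pos rfl

lemma eq_of_pointMass_ne_zero [DecidableEq X] {c x : X} (h : pointMass c x ≠ 0) : x = c := by
  by_contra hx
  exact h (if_neg hx)

lemma isDist_pointMass [Fintype X] [DecidableEq X] (c : X) : IsDist (pointMass c) :=
  ⟨fun x => by unfold pointMass; split <;> norm_num, by simp [pointMass]⟩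

lemma sum_pointMass_mul [Fintype X] [DecidableEq X] (c : X) (f : X → ℝ) :
    ∑ x, pointMass c x * f x = f c := by
  simp [pointMass]

lemma IsDist.exists_pos [Fintype X] {p : X → ℝ} (hp : IsDist p) : ∃ x, 0 < p x := by
  obtain ⟨x, -, hx⟩ := Finset.exists_lt_of_sum_lt (s := Finset.univ) (f := fun _ => (0 : ℝ))
    (g := p) (by simp [hp.2])
  exact ⟨x, hx⟩

lemma expU2_pointMass [Fintype Θ] [DecidableEq Θ] (u₂ : Θ → S → A → ℝ) (θ : Θ) (s : S)
    (a : A) : expU2 u₂ (pointMass θ) s a = u₂ θ s a :=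
  sum_pointMass_mul θ (fun θ => u₂ θ s a)

lemma mem_ABR_of_forall_le [Fintype Θ] [Fintype A] (u₂ : Θ → S → A → ℝ) {s : S} {a : A} (θ : Θ)
    (h : ∀ a', u₂ θ s a' ≤ u₂ θ s a) : a ∈ ABR u₂ s :=
  ⟨pointMass θ, isDist_pointMass θ, fun a' => by simpa only [expU2_pointMass] using h a'⟩

lemma u1R_pointMass [Fintype A] [DecidableEq A] (u₁ : Θ → S → A → ℝ) (c : A) (θ : Θ) (s : S) :
    u1R u₁ (fun _ => pointMass c) θ s = u₁ θ s c :=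
  sum_pointMass_mul c (u₁ θ s)

lemma rational2_pointMass [Fintype Θ] [Fintype A] [DecidableEq A] (u₂ : Θ → S → A → ℝ) {c : A}
    (hc : ∀ s, c ∈ ABR u₂ s) : Rational2 u₂ (fun _ => pointMass c) :=
  ⟨fun _ => isDist_pointMass c, fun s _ ha => eq_of_pointMass_ne_zero ha ▸ hc s⟩

lemma u1R_lt_of_forall_lt [Fintype A] (u₁ : Θ → S → A → ℝ) {π₂ : S → A → ℝ} {s : S} {θ θ' : Θ}
    (hπ : IsDist (π₂ s)) (h : ∀ a, u₁ θ s a < u₁ θ' s a) :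
    u1R u₁ π₂ θ s < u1R u₁ π₂ θ' s := by
  obtain ⟨a, ha⟩ := hπ.exists_pos
  exact Finset.sum_lt_sum (fun b _ => mul_le_mul_of_nonneg_left (h b).le (hπ.1 b))
    ⟨a, Finset.mem_univ a, mul_lt_mul_of_pos_left (h a) ha⟩

lemma u1R_le_of_forall_le [Fintype A] (u₁ : Θ → S → A → ℝ) {π₂ : S → A → ℝ} {s : S} {θ θ' : Θ}
    (hπ : IsDist (π₂ s)) (h : ∀ a, u₁ θ s a ≤ u₁ θ' s a) :
    u1R u₁ π₂ θ s ≤ u1R u₁ π₂ θ' s :=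
  Finset.sum_le_sum fun b _ => mul_le_mul_of_nonneg_left (h b) (hπ.1 b)

lemma moreCompat_of_dominates [Fintype Θ] [Fintype A] (u₁ u₂ : Θ → S → A → ℝ) {s : S}
    {θ' θ'' : Θ} (hs : ∀ a, u₁ θ'' s a < u₁ θ' s a)
    (hoff : ∀ s' ≠ s, ∀ a, u₁ θ' s' a ≤ u₁ θ'' s' a) :
    MoreCompat u₁ u₂ s θ' θ'' := fun π₂ hπ₂ hweak s' hs' =>
  calc u1R u₁ π₂ θ' s' ≤ u1R u₁ π₂ θ'' s' := u1R_le_of_forall_le u₁ (hπ₂.1 s') (hoff s' hs')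
    _ ≤ u1R u₁ π₂ θ'' s := hweak s' hs'
    _ < u1R u₁ π₂ θ' s := u1R_lt_of_forall_lt u₁ (hπ₂.1 s) hs

lemma not_moreCompat_of_pointMass [Fintype Θ] [Fintype A] [DecidableEq A]
    (u₁ u₂ : Θ → S → A → ℝ) {s s₀ : S} {θ' θ'' : Θ} {c : A} (hc : ∀ s, c ∈ ABR u₂ s)
    (hweak : ∀ s' ≠ s, u₁ θ'' s' c ≤ u₁ θ'' s c) (hs₀ : s₀ ≠ s)
    (hnot : u₁ θ' s c ≤ u₁ θ' s₀ c) : ¬ MoreCompat u₁ u₂ s θ' θ'' := by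
  intro h
  have hstrict := h _ (rational2_pointMass u₂ hc)
    (fun s' hs' => by simpa only [u1R_pointMass] using hweak s' hs') s₀ hs₀
  simp only [u1R_pointMass] at hstrict
  linarith

lemma eqPayoff_pooling [Fintype S] [Fintype A] [DecidableEq S] [DecidableEq A]
    (u₁ : Θ → S → A → ℝ) (s₀ : S) (c : A) (θ : Θ) :
    eqPayoff u₁ (fun _ => pointMass s₀) (fun _ => pointMass c) θ = u₁ θ s₀ c := by
  simp only [eqPayoff, u1R_pointMass, sum_pointMass_mul]

lemma nashEq_pooling [Fintype Θ] [Fintype S] [Fintype A] [DecidableEq S] [DecidableEq A]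
    (lam : Θ → ℝ) (u₁ u₂ : Θ → S → A → ℝ) {s₀ : S} {c : A} (hsender : ∀ θ s, u₁ θ s c ≤ u₁ θ s₀ c)
    (hreceiver : ∀ a, ∑ θ, lam θ * u₂ θ s₀ a ≤ ∑ θ, lam θ * u₂ θ s₀ c) :
    NashEq lam u₁ u₂ (fun _ => pointMass s₀) (fun _ => pointMass c) := by
  refine ⟨fun _ => isDist_pointMass s₀, fun _ => isDist_pointMass c, ?_, ?_⟩
  · intro θ s hs s'
    obtain rfl := eq_of_pointMass_ne_zero hs
    simpa only [u1R_pointMass] using hsender θ s'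
  · rintro s ⟨θ, hθ⟩ a ha a'
    obtain rfl := eq_of_pointMass_ne_zero hθ
    obtain rfl := eq_of_pointMass_ne_zero ha
    simpa only [pointMass_self, mul_one] using hreceiver a'

lemma oddsLe_self (lam p : Θ → ℝ) (θ : Θ) : OddsLe lam θ θ p := le_of_eq (mul_comm _ _)

lemma oddsLe_prior (lam : Θ → ℝ) (θ' θ'' : Θ) : OddsLe lam θ' θ'' lam := le_rfl

lemma mem_Pt_of_forall_mem_Jt [Fintype Θ] [Fintype S] [Fintype A] {lam : Θ → ℝ}
    {u₁ u₂ : Θ → S → A → ℝ} {π₁ : Θ → S → ℝ} {π₂ : S → A → ℝ} {s : S} {p : Θ → ℝ}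
    (hJ : ∀ θ, θ ∈ Jt u₁ u₂ π₁ π₂ s) (hp : IsDist p)
    (hodds : ∀ θ' θ'', MoreCompat u₁ u₂ s θ' θ'' → OddsLe lam θ' θ'' p) :
    p ∈ Pt lam u₁ u₂ π₁ π₂ s := by
  obtain ⟨θ, -⟩ := hp.exists_pos
  rw [Pt, if_pos ⟨θ, hJ θ⟩]
  exact ⟨⟨hp, fun θ hθ => absurd (hJ θ) hθ⟩, hodds⟩

end General

lemma Ty.sum_eq (f : Ty → ℝ) : ∑ θ, f θ = f .t1 + f .t2 + f .t3 := by
  rw [show (Finset.univ : Finset Ty) = {.t1, .t2, .t3} from rfl, Finset.sum_insert (by decide),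
    Finset.sum_pair (by decide), add_assoc]

lemma Sg.eq_s1_of_ne_s2 {s : Sg} (h : s ≠ .s2) : s = .s1 := by
  cases s
  · rfl
  · exact absurd rfl h

lemma u1G_s1 (θ : Ty) (a : Ac) : u1G θ .s1 a = 0 := by
  cases θ <;> cases a <;> rfl

lemma u2G_s1 (θ : Ty) (a : Ac) : u2G θ .s1 a = 0 := by
  cases θ <;> cases a <;> rfl

lemma pi1G_eq : pi1G = fun _ => pointMass Sg.s1 := rfl

lemma pi2G_eq : pi2G = fun _ => pointMass Ac.a4 := rfl

lemma mem_ABR_u2G {a : Ac} (ha : a ≠ .a4) (s : Sg) : a ∈ ABR u2G s := by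
  cases s
  · exact mem_ABR_of_forall_le u2G .t1 fun a' => by simp only [u2G_s1, le_refl]
  · cases a
    · exact mem_ABR_of_forall_le u2G .t1 fun a' => by cases a' <;> norm_num [u2G]
    · exact mem_ABR_of_forall_le u2G .t2 fun a' => by cases a' <;> norm_num [u2G]
    · exact mem_ABR_of_forall_le u2G .t3 fun a' => by cases a' <;> norm_num [u2G]
    · exact absurd rfl ha

lemma moreCompat_t2_t1 : MoreCompat u1G u2G .s2 .t2 .t1 :=
  moreCompat_of_dominates u1G u2G (fun a => by cases a <;> norm_num [u1G])
    (fun s' hs' a => by rw [Sg.eq_s1_of_ne_s2 hs', u1G_s1, u1G_s1])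

lemma not_moreCompat_s2 {θ' θ'' : Ty} (c : Ac) (hc : c ≠ .a4) (hweak : 0 ≤ u1G θ'' .s2 c)
    (hnot : u1G θ' .s2 c ≤ 0) : ¬ MoreCompat u1G u2G .s2 θ' θ'' :=
  not_moreCompat_of_pointMass u1G u2G (s₀ := .s1) (mem_ABR_u2G hc)
    (fun s' hs' => by rwa [Sg.eq_s1_of_ne_s2 hs', u1G_s1])
    (by decide) (by rwa [u1G_s1])

lemma eq_of_moreCompat_s2 {θ' θ'' : Ty} (hne : θ' ≠ θ'') (h : MoreCompat u1G u2G .s2 θ' θ'') :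
    θ' = .t2 ∧ θ'' = .t1 := by
  cases θ' <;> cases θ''
  · exact absurd rfl hne
  · exact absurd h (not_moreCompat_s2 .a2 (by decide) (by norm_num [u1G]) (by norm_num [u1G]))
  · exact absurd h (not_moreCompat_s2 .a2 (by decide) (by norm_num [u1G]) (by norm_num [u1G]))
  · exact ⟨rfl, rfl⟩
  · exact absurd rfl hne
  · exact absurd h (not_moreCompat_s2 .a3 (by decide) (by norm_num [u1G]) (by norm_num [u1G]))
  · exact absurd h (not_moreCompat_s2 .a1 (by decide) (by norm_num [u1G]) (by norm_num [u1G]))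
  · exact absurd h (not_moreCompat_s2 .a1 (by decide) (by norm_num [u1G]) (by norm_num [u1G]))
  · exact absurd rfl hne

lemma nashEq_pooling_G : NashEq lamG u1G u2G pi1G pi2G := by
  rw [pi1G_eq, pi2G_eq]
  refine nashEq_pooling lamG u1G u2G (fun θ s => ?_) (fun a => ?_)
  · rw [u1G_s1]
    cases θ <;> cases s <;> norm_num [u1G]
  · simp only [u2G_s1, mul_zero, le_refl]

lemma mem_Jt_G (θ : Ty) (s : Sg) : θ ∈ Jt u1G u2G pi1G pi2G s := by
  have hzero : eqPayoff u1G pi1G pi2G θ = 0 := by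
    rw [pi1G_eq, pi2G_eq, eqPayoff_pooling, u1G_s1]
  suffices ∃ a ≠ Ac.a4, 0 ≤ u1G θ s a by
    obtain ⟨a, ha, hpay⟩ := this
    exact ⟨a, mem_ABR_u2G ha s, hzero ▸ hpay⟩
  cases s
  · exact ⟨.a1, by decide, (u1G_s1 θ .a1).ge⟩
  · cases θ
    · exact ⟨.a1, by decide, by norm_num [u1G]⟩
    · exact ⟨.a1, by decide, by norm_num [u1G]⟩
    · exact ⟨.a2, by decide, by norm_num [u1G]⟩

/-- Puts no weight on `θ'`, as `θ'' ≿_{s''} θ'` allows; against it `a⁴` earns `0.8`, more than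
`a²` (`0.7`) and `a³` (`0.51`). -/
def beliefS2 : Ty → ℝ
  | .t1 => 0
  | .t2 => 0.7
  | .t3 => 0.3

lemma isDist_beliefS2 : IsDist beliefS2 :=
  ⟨fun θ => by cases θ <;> norm_num [beliefS2], by rw [Ty.sum_eq]; norm_num [beliefS2]⟩

lemma a4_mem_BRb_beliefS2 : Ac.a4 ∈ BRb u2G beliefS2 .s2 := by
  intro a'
  simp only [expU2, Ty.sum_eq]
  cases a' <;> norm_num [beliefS2, u2G]

lemma oddsLe_beliefS2 (θ' θ'' : Ty) (h : MoreCompat u1G u2G .s2 θ' θ'') :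
    OddsLe lamG θ' θ'' beliefS2 := by
  by_cases hne : θ' = θ''
  · exact hne ▸ oddsLe_self lamG beliefS2 θ'
  · obtain ⟨rfl, rfl⟩ := eq_of_moreCompat_s2 hne h
    norm_num [OddsLe, lamG, beliefS2]

lemma isDist_lamG : IsDist lamG :=
  ⟨fun _ => by norm_num [lamG], by rw [Ty.sum_eq]; norm_num [lamG]⟩

/-- in the three-type game, the pooling profile (with the receiver playing
`a⁴` everywhere) is an RCE, and the only pair of distinct types related by rational
compatibility at `s''` is `θ'' ≿_{s''} θ'`. -/
theorem three_type_pooling_is_RCE_and_unique_compat_pair :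
    RCE lamG u1G u2G pi1G pi2G ∧
    MoreCompat u1G u2G Sg.s2 Ty.t2 Ty.t1 ∧
    (∀ θa θb : Ty, θa ≠ θb → MoreCompat u1G u2G Sg.s2 θa θb →
      θa = Ty.t2 ∧ θb = Ty.t1) := by
  refine ⟨⟨nashEq_pooling_G, fun s a ha => ?_⟩, moreCompat_t2_t1,
    fun _ _ => eq_of_moreCompat_s2⟩
  obtain rfl : a = Ac.a4 := eq_of_pointMass_ne_zero ha
  cases s
  · refine ⟨lamG, mem_Pt_of_forall_mem_Jt (mem_Jt_G · .s1) isDist_lamG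
      (fun θ' θ'' _ => oddsLe_prior lamG θ' θ''), fun a' => ?_⟩
    simp only [expU2, u2G_s1, mul_zero, le_refl]
  · exact ⟨beliefS2, mem_Pt_of_forall_mem_Jt (mem_Jt_G · .s2) isDist_beliefS2 oddsLe_beliefS2,
      a4_mem_BRb_beliefS2⟩

end
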